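/- arXiv:1609.06414 — 4 statements merged into one kernel-verified Lean document; each statement's English description precedes it below -/
import Mathlib

section
/- Let n ≥ 2 be an integer, let F be a finite field with q elements such that n divides q − 1, and let χ be a multiplicative character of F with values in ℂ (extended by χ(0) = 0) whose order is exactly n. Then for every integer i with 1 ≤ i ≤ n − 1, ∑_{x ∈ F} ∑_{y ∈ F} χ^i(f_n(x,y)) = χ(−1)^i · ∑_{x ∈ F} ∑_{y ∈ F} χ^{n−i}(f_n(x,y)), where f_n(x,y) = (xy)^{n−1}(1−x)(1−y)(1−xy)^{n−1}. -/
/-!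
The substitution `T(x, y) = ((1 - x)/(x(y - 1)), (1 - y)/(y(x - 1)))` permutes the points where
`f_n` does not vanish (`T ∘ T` is the swap `(x, y) ↦ (y, x)`, under which `f_n` is symmetric), and
`f_n(T(x, y)) · f_n(x, y) = -c^n` with `c = -(1 - xy)²/(xy)`. For a character of order `n` this
gives `χ^i(f_n(x, y)) = χ(-1)^i · χ^(n-i)(f_n(T(x, y)))` pointwise, and summing over the
permuted support yields the identity.
-/

/-- The polynomial `f_n(x,y) = (xy)^{n-1}(1-x)(1-y)(1-xy)^{n-1}`. -/
def fpoly (n : ℕ) {F : Type*} [CommRing F] (x y : F) : F :=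
  (x * y) ^ (n - 1) * (1 - x) * (1 - y) * (1 - x * y) ^ (n - 1)

open Finset

theorem MulChar.pow_apply_eq_of_mul_eq_neg_pow {R R' : Type*} [CommRing R]
    [CommMonoidWithZero R'] (χ : MulChar R R') {n i : ℕ} (hχ : χ ^ n = 1) (hi : i ≤ n)
    {P Q c : R} (hc : IsUnit c) (hQP : Q * P = -c ^ n) :
    (χ ^ i) P = χ (-1) ^ i * (χ ^ (n - i)) Q := by
  have hQ : IsUnit Q := isUnit_of_mul_isUnit_left (hQP ▸ (hc.pow n).neg)
  have h_neg_one : (χ ^ i) (-1) = χ (-1) ^ i := by simpa using pow_apply_coe χ i (-1)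
  have h_pow : (χ ^ i) (c ^ n) = 1 := by
    lift c to Rˣ using hc
    rw [map_pow, ← pow_apply_coe, ← pow_mul, mul_comm, pow_mul, hχ, one_pow, one_apply_coe]
  have h_inv : (χ ^ (n - i)) Q * (χ ^ i) Q = 1 := by
    rw [← mul_apply, ← pow_add, Nat.sub_add_cancel hi, hχ, one_apply hQ]
  calc (χ ^ i) P = (χ ^ (n - i)) Q * (χ ^ i) Q * (χ ^ i) P := by rw [h_inv, one_mul]
    _ = (χ ^ (n - i)) Q * ((χ ^ i) (-1) * (χ ^ i) (c ^ n)) := by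
      rw [mul_assoc, ← map_mul, hQP, neg_eq_neg_one_mul, map_mul]
    _ = χ (-1) ^ i * (χ ^ (n - i)) Q := by rw [h_neg_one, h_pow, mul_one, mul_comm]

section CommRing

variable {R : Type*} [CommRing R]

theorem fpoly_swap (n : ℕ) (x y : R) : fpoly n y x = fpoly n x y := by
  unfold fpoly; ring

theorem fpoly_ne_zero_iff [NoZeroDivisors R] {n : ℕ} (hn : 2 ≤ n) {x y : R} :
    fpoly n x y ≠ 0 ↔ x ≠ 0 ∧ x ≠ 1 ∧ y ≠ 0 ∧ y ≠ 1 ∧ x * y ≠ 1 := by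
  have hn1 : n - 1 ≠ 0 := by omega
  simp only [fpoly, ne_eq, mul_eq_zero, hn1, not_false_eq_true, pow_eq_zero_iff, sub_eq_zero,
    eq_comm (a := (1 : R)), or_assoc, not_or, and_congr_right_iff]
  tauto

end CommRing

section Field

variable {F : Type*} [Field F]

def twistCoord (x y : F) : F := (1 - x) / (x * (y - 1))

def fpolyTwist (p : F × F) : F × F := (twistCoord p.1 p.2, twistCoord p.2 p.1)

theorem fpolyTwist_swap (p : F × F) : fpolyTwist p.swap = (fpolyTwist p).swap := rfl

theorem twistCoord_mul_twistCoord {x y : F} (hx : x ≠ 1) (hy : y ≠ 1) :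
    twistCoord x y * twistCoord y x = (x * y)⁻¹ := by
  have hx' : 1 - x ≠ 0 := sub_ne_zero_of_ne hx.symm
  have hy' : 1 - y ≠ 0 := sub_ne_zero_of_ne hy.symm
  unfold twistCoord
  field_simp
  ring

theorem one_sub_twistCoord {x y : F} (hx : x ≠ 0) (hy : y ≠ 1) :
    1 - twistCoord x y = (1 - x * y) / (x * (1 - y)) := by
  have hy' : 1 - y ≠ 0 := sub_ne_zero_of_ne hy.symm
  unfold twistCoord
  field_simp
  ring

theorem twistCoord_twistCoord {x y : F} (hx0 : x ≠ 0) (hx1 : x ≠ 1) (hy0 : y ≠ 0)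
    (hy1 : y ≠ 1) (hxy : x * y ≠ 1) : twistCoord (twistCoord x y) (twistCoord y x) = y := by
  have hx1' : 1 - x ≠ 0 := sub_ne_zero_of_ne hx1.symm
  have hy1' : 1 - y ≠ 0 := sub_ne_zero_of_ne hy1.symm
  have hxy' : 1 - x * y ≠ 0 := sub_ne_zero_of_ne hxy.symm
  rw [twistCoord, one_sub_twistCoord hx0 hy1, ← neg_sub 1, one_sub_twistCoord hy0 hx1, twistCoord]
  field_simp
  ring

theorem fpolyTwist_fpolyTwist {x y : F} (hx0 : x ≠ 0) (hx1 : x ≠ 1) (hy0 : y ≠ 0)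
    (hy1 : y ≠ 1) (hxy : x * y ≠ 1) : fpolyTwist (fpolyTwist (x, y)) = (y, x) := by
  rw [fpolyTwist, fpolyTwist, twistCoord_twistCoord hx0 hx1 hy0 hy1 hxy,
    twistCoord_twistCoord hy0 hy1 hx0 hx1 (by rwa [mul_comm])]

theorem fpoly_twistCoord_mul_fpoly {n : ℕ} (hn : n ≠ 0) {x y : F} (hx0 : x ≠ 0) (hx1 : x ≠ 1)
    (hy0 : y ≠ 0) (hy1 : y ≠ 1) :
    fpoly n (twistCoord x y) (twistCoord y x) * fpoly n x y
      = -(-(1 - x * y) ^ 2 / (x * y)) ^ n := by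
  have hx1' : 1 - x ≠ 0 := sub_ne_zero_of_ne hx1.symm
  have hy1' : 1 - y ≠ 0 := sub_ne_zero_of_ne hy1.symm
  have h_inv : 1 - (x * y)⁻¹ = -(1 - x * y) / (x * y) := by field_simp; ring
  obtain ⟨m, rfl⟩ := Nat.exists_eq_add_one.mpr (Nat.pos_of_ne_zero hn)
  simp only [fpoly, Nat.add_sub_cancel, twistCoord_mul_twistCoord hx1 hy1,
    one_sub_twistCoord hx0 hy1, one_sub_twistCoord hy0 hx1, mul_comm y x, h_inv]
  simp only [neg_div, neg_pow (_ / _), div_pow, inv_pow, ← pow_mul]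
  field_simp
  ring

theorem exists_fpoly_fpolyTwist_mul_eq_neg_pow {n : ℕ} (hn : 2 ≤ n) {p : F × F}
    (hp : fpoly n p.1 p.2 ≠ 0) :
    ∃ c ≠ 0, fpoly n (fpolyTwist p).1 (fpolyTwist p).2 * fpoly n p.1 p.2 = -c ^ n := by
  obtain ⟨hx0, hx1, hy0, hy1, hxy⟩ := (fpoly_ne_zero_iff hn).mp hp
  refine ⟨-(1 - p.1 * p.2) ^ 2 / (p.1 * p.2), ?_,
    fpoly_twistCoord_mul_fpoly (by omega) hx0 hx1 hy0 hy1⟩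
  exact div_ne_zero (neg_ne_zero.mpr (pow_ne_zero 2 (sub_ne_zero_of_ne hxy.symm)))
    (mul_ne_zero hx0 hy0)

theorem fpoly_fpolyTwist_ne_zero {n : ℕ} (hn : 2 ≤ n) {p : F × F} (hp : fpoly n p.1 p.2 ≠ 0) :
    fpoly n (fpolyTwist p).1 (fpolyTwist p).2 ≠ 0 := by
  obtain ⟨c, hc, h⟩ := exists_fpoly_fpolyTwist_mul_eq_neg_pow hn hp
  exact left_ne_zero_of_mul (h ▸ neg_ne_zero.mpr (pow_ne_zero n hc))

theorem sum_comp_fpolyTwist [Fintype F] [DecidableEq F] {M : Type*} [AddCommMonoid M] {n : ℕ}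
    (hn : 2 ≤ n) (g : F × F → M) :
    ∑ p ∈ univ.filter (fun p : F × F => fpoly n p.1 p.2 ≠ 0), g (fpolyTwist p)
      = ∑ p ∈ univ.filter (fun p : F × F => fpoly n p.1 p.2 ≠ 0), g p := by
  have h_twist_twist {p : F × F} (hp : fpoly n p.1 p.2 ≠ 0) :
      fpolyTwist (fpolyTwist p) = p.swap := by
    obtain ⟨hx0, hx1, hy0, hy1, hxy⟩ := (fpoly_ne_zero_iff hn).mp hp
    exact fpolyTwist_fpolyTwist hx0 hx1 hy0 hy1 hxy
  refine sum_nbij' fpolyTwist (fun p => (fpolyTwist p).swap) ?_ ?_ ?_ ?_ (fun _ _ => rfl)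
  · intro p hp
    simpa using fpoly_fpolyTwist_ne_zero hn (mem_filter.mp hp).2
  · intro p hp
    simpa [fpoly_swap] using fpoly_fpolyTwist_ne_zero hn (mem_filter.mp hp).2
  · intro p hp
    simp [h_twist_twist (mem_filter.mp hp).2]
  · intro p hp
    rw [fpolyTwist_swap, h_twist_twist (mem_filter.mp hp).2, Prod.swap_swap]

end Field

theorem char_sum_reflection_general
    {F : Type*} [Field F] [Fintype F]
    (n : ℕ) (hn : 2 ≤ n)
    (χ : MulChar F ℂ) (hord : orderOf χ = n)
    (i : ℕ) (hi2 : i ≤ n - 1) :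
    ∑ x : F, ∑ y : F, (χ ^ i) (fpoly n x y)
      = (χ (-1)) ^ i * ∑ x : F, ∑ y : F, (χ ^ (n - i)) (fpoly n x y) := by
  classical
  have hχ : χ ^ n = 1 := hord ▸ pow_orderOf_eq_one χ
  have h_support (k : ℕ) : ∑ x : F, ∑ y : F, (χ ^ k) (fpoly n x y)
      = ∑ p ∈ univ.filter (fun p : F × F => fpoly n p.1 p.2 ≠ 0), (χ ^ k) (fpoly n p.1 p.2) := by
    rw [← Fintype.sum_prod_type', sum_filter_of_ne]
    intro p _ h
    contrapose! h
    rw [h, MulChar.map_zero]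
  rw [h_support, h_support, mul_sum]
  conv_rhs => rw [← sum_comp_fpolyTwist hn]
  refine sum_congr rfl fun p hp => ?_
  obtain ⟨c, hc, hprod⟩ := exists_fpoly_fpolyTwist_mul_eq_neg_pow hn (mem_filter.mp hp).2
  exact χ.pow_apply_eq_of_mul_eq_neg_pow hχ (by omega) hc.isUnit hprod

/-- **Identity (5.10)** of the paper.  Let `F` be a finite field with `q`
elements, `n ≥ 2` with `n ∣ q - 1`, and `χ` a multiplicative character of `F`
with values in `ℂ` of exact order `n`.  Then for every `1 ≤ i ≤ n - 1`,
`∑_{x,y} χ^i(f_n(x,y)) = χ(-1)^i · ∑_{x,y} χ^{n-i}(f_n(x,y))`. -/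
theorem char_sum_reflection
    {F : Type*} [Field F] [Fintype F]
    (n : ℕ) (hn : 2 ≤ n) (hdvd : n ∣ Fintype.card F - 1)
    (χ : MulChar F ℂ) (hord : orderOf χ = n)
    (i : ℕ) (hi1 : 1 ≤ i) (hi2 : i ≤ n - 1) :
    ∑ x : F, ∑ y : F, (χ ^ i) (fpoly n x y)
      = (χ (-1)) ^ i * ∑ x : F, ∑ y : F, (χ ^ (n - i)) (fpoly n x y) :=
  char_sum_reflection_general n hn χ hord i hi2
end

section
/- Let K be a field, n ≥ 2 an integer, ζ ∈ K with ζ^n = −1, and let g : K → K be a ring homomorphism (automatically injective) such that g(ζ) = ζ^p for some odd integer p. On triples (x, y, s) ∈ K³ with s ≠ 0 and xy ≠ 1, define A(x,y,s) = (1−x, 1/(1−xy), ζ(1−x)(1−y)x²y/(s(1−xy))) and, for an integer m, let Z^m denote the map (x,y,s) ↦ (x, y, ζ^{−2m}s); let ḡ denote the coordinatewise application of g. Then for every such triple: (i) ḡ(A(x,y,s)) = Z^{(1−p)/2}(A(ḡ(x,y,s))); and (ii) ḡ(Z^1(x,y,s)) = Z^p(ḡ(x,y,s)). -/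
/-! Applying `g` coordinatewise commutes with every field operation, so `ḡ ∘ A_ζ = A_{g ζ} ∘ ḡ`,
and `Z^m` only rescales the constant of `A`: `Z^m ∘ A_η = A_{ζ^{-2m} η}`. For odd `p` the exponent
`-2 · (1 - p)/2` is exactly `p - 1`, so both sides of the first identity equal `A_{ζ^p} ∘ ḡ`. -/

/-- The symmetry `A` of the surface `E_n : s^n = f_n(x,y)`, where `ζ` plays
the role of a primitive `2n`-th root of unity:
`A(x,y,s) = (1-x, 1/(1-xy), ζ(1-x)(1-y)x²y/(s(1-xy)))`. -/
def Amap {K : Type*} [Field K] (ζ : K) (p : K × K × K) : K × K × K :=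
  (1 - p.1, 1 / (1 - p.1 * p.2.1),
    ζ * (1 - p.1) * (1 - p.2.1) * p.1 ^ 2 * p.2.1 / (p.2.2 * (1 - p.1 * p.2.1)))

/-- The symmetry `Z^m : (x,y,s) ↦ (x, y, ζ^{-2m} s)`, where `ζ²` plays the
role of the `n`-th root of unity `ζ_n`. -/
def Zpow {K : Type*} [Field K] (ζ : K) (m : ℤ) (p : K × K × K) : K × K × K :=
  (p.1, p.2.1, ζ ^ (-2 * m) * p.2.2)

/-- Coordinatewise application of a ring endomorphism `g` of `K`. -/
def coordMap {K : Type*} [Field K] (g : K →+* K) (p : K × K × K) : K × K × K :=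
  (g p.1, g p.2.1, g p.2.2)

section

variable {K : Type*} [Field K]

theorem coordMap_Amap (g : K →+* K) (ζ : K) (q : K × K × K) :
    coordMap g (Amap ζ q) = Amap (g ζ) (coordMap g q) := by
  simp [coordMap, Amap]

theorem coordMap_Zpow {g : K →+* K} {ζ : K} {p : ℤ} (hg : g ζ = ζ ^ p) (m : ℤ)
    (q : K × K × K) : coordMap g (Zpow ζ m q) = Zpow ζ (p * m) (coordMap g q) := by
  simp [coordMap, Zpow, hg, ← zpow_mul, mul_left_comm]

theorem Zpow_Amap (ζ η : K) (m : ℤ) (q : K × K × K) :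
    Zpow ζ m (Amap η q) = Amap (ζ ^ (-2 * m) * η) q := by
  simp [Zpow, Amap, mul_div_assoc, mul_assoc]

theorem Int.neg_two_mul_one_sub_ediv_two {p : ℤ} (hp : Odd p) : -2 * ((1 - p) / 2) = p - 1 := by
  obtain ⟨k, rfl⟩ := hp
  omega

theorem zpow_sub_one_mul_self {G₀ : Type*} [GroupWithZero G₀] (a : G₀) {p : ℤ} (hp : p ≠ 0) :
    a ^ (p - 1) * a = a ^ p := by
  simpa using (zpow_add' (a := a) (m := p - 1) (n := 1) (Or.inr (Or.inl (by simpa using hp)))).symm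

end

theorem frobenius_commutation_general
    {K : Type*} [Field K] (ζ : K)
    (g : K →+* K) (p : ℤ) (hp : Odd p) (hg : g ζ = ζ ^ p)
    (x y s : K) :
    coordMap g (Amap ζ (x, y, s))
        = Zpow ζ ((1 - p) / 2) (Amap ζ (coordMap g (x, y, s))) ∧
    coordMap g (Zpow ζ 1 (x, y, s)) = Zpow ζ p (coordMap g (x, y, s)) := by
  constructor
  · rw [coordMap_Amap, hg, Zpow_Amap, Int.neg_two_mul_one_sub_ediv_two hp,
      zpow_sub_one_mul_self ζ (by rintro rfl; exact Int.not_odd_zero hp)]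
  · rw [coordMap_Zpow hg, mul_one]

/-- **Lemma 5.8** of the paper (point level).  Let `K` be a field, `n ≥ 2`,
`ζ ∈ K` with `ζ^n = -1`, and `g : K → K` a ring homomorphism with
`g(ζ) = ζ^p` for an odd integer `p`.  Then on triples `(x,y,s)` with `s ≠ 0`
and `xy ≠ 1` one has `ḡ ∘ A = Z^{(1-p)/2} ∘ A ∘ ḡ` and `ḡ ∘ Z = Z^p ∘ ḡ`. -/
theorem frobenius_commutation
    {K : Type*} [Field K] (n : ℕ) (hn : 2 ≤ n) (ζ : K) (hζ : ζ ^ n = -1)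
    (g : K →+* K) (p : ℤ) (hp : Odd p) (hg : g ζ = ζ ^ p)
    (x y s : K) (hs : s ≠ 0) (hxy : x * y ≠ 1) :
    coordMap g (Amap ζ (x, y, s))
        = Zpow ζ ((1 - p) / 2) (Amap ζ (coordMap g (x, y, s))) ∧
    coordMap g (Zpow ζ 1 (x, y, s)) = Zpow ζ p (coordMap g (x, y, s)) :=
  frobenius_commutation_general ζ g p hp hg x y s
end

section
/- Let n = 2m be a positive even integer and p an odd integer. Let R be a (possibly noncommutative) ring and a, z, φ ∈ R with z invertible, z·a·z = a, z^m = −1 (hence z^n = 1), and suppose a·φ = φ·a·z^{(1−p)/2} and z·φ = φ·z^p, where z^k for k ∈ ℤ denotes the integer power of the unit z. Set b₊ = (1 + z^{−1})·a, b₋ = (1 − z^{−1})·a, and b = z − z^{−1}. Then: (1) if p ≡ 1 or −1 (mod 2n) then b₊φ = φb₊, while if p ≡ n+1 or n−1 (mod 2n) then b₊φ = −φb₊; (2) if p ≡ 1 or n−1 (mod 2n) then b₋φ = φb₋, while if p ≡ −1 or n+1 (mod 2n) then b₋φ = −φb₋; (3) if p ≡ 1 (mod n) then bφ = φb, while if p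 ≡ −1 (mod n) then bφ = −φb. -/
/-!
Write `q = (1 - p)/2`, so that `q + p = (1 + p)/2` since `p` is odd. Moving `φ` to the left
through `a` and `z⁻¹` (using `z⁻¹ a = a z` and `z φ = φ z^p`) gives
`b₊ φ = φ a (z^q + z^(q+p))` and `b₋ φ = φ a (z^q - z^(q+p))`, while `φ b₊ = φ a (1 + z)` and
`φ b₋ = φ a (1 - z)` are the same expressions at `p = 1`. Since `z^m = -1`, the function
`p ↦ z^((1-p)/2) ± z^((1+p)/2)` has period `4m`, changes sign under `p ↦ p + 2m`, and is
even (for `+`) or odd (for `-`) in `p`; this settles `b₊` and `b₋`. Finally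
`b φ = φ (z^p - z^(-p))`, and `z^p` only depends on `p` modulo `2m`.
-/

theorem Int.ModEq.ediv_two {n a b : ℤ} (h : a ≡ b [ZMOD 2 * n]) : a / 2 ≡ b / 2 [ZMOD n] := by
  rw [Int.modEq_iff_dvd] at h ⊢
  obtain ⟨t, ht⟩ := h
  exact ⟨t, by rw [mul_assoc] at ht; omega⟩

theorem Int.ModEq.half_exponents {m p r : ℤ} (h : p ≡ r [ZMOD 4 * m]) :
    (1 - p) / 2 ≡ (1 - r) / 2 [ZMOD 2 * m] ∧ (1 + p) / 2 ≡ (1 + r) / 2 [ZMOD 2 * m] := by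
  rw [show 4 * m = 2 * (2 * m) by ring] at h
  exact ⟨(h.sub_left 1).ediv_two, (h.add_left 1).ediv_two⟩

theorem Int.ModEq.half_exponents_add {m p r : ℤ} (h : p ≡ r + 2 * m [ZMOD 4 * m]) :
    (1 - p) / 2 ≡ (1 - r) / 2 + m [ZMOD 2 * m] ∧ (1 + p) / 2 ≡ (1 + r) / 2 + m [ZMOD 2 * m] := by
  obtain ⟨h₁, h₂⟩ := h.half_exponents
  exact ⟨h₁.trans (Int.modEq_iff_dvd.mpr ⟨1, by omega⟩),
    h₂.trans (Int.modEq_iff_dvd.mpr ⟨0, by omega⟩)⟩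

theorem Units.inv_mul_eq_mul_of_mul_mul_eq {M : Type*} [Monoid M] {z : Mˣ} {a : M}
    (h : (z : M) * a * z = a) : ((z⁻¹ : Mˣ) : M) * a = a * z := by
  rw [Units.inv_mul_eq_iff_eq_mul, ← mul_assoc, h]

section HalfPowers

variable {R : Type*} [Ring R] {z : Rˣ} {m : ℕ}

theorem Units.zpow_eq_of_modEq (hz : (z : R) ^ m = -1) {k l : ℤ} (h : k ≡ l [ZMOD 2 * m]) :
    ((z ^ k : Rˣ) : R) = ((z ^ l : Rˣ) : R) := by
  have hz2 : z ^ (2 * (m : ℤ)) = 1 := by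
    ext
    rw [mul_comm, zpow_mul, zpow_natCast, zpow_two, Units.val_mul, Units.val_pow_eq_pow_val, hz,
      neg_one_mul, neg_neg, Units.val_one]
  rw [zpow_eq_zpow_emod k hz2, zpow_eq_zpow_emod l hz2, h.eq]

theorem Units.zpow_eq_neg_of_modEq (hz : (z : R) ^ m = -1) {k l : ℤ}
    (h : k ≡ l + m [ZMOD 2 * m]) : ((z ^ k : Rˣ) : R) = -((z ^ l : Rˣ) : R) := by
  rw [Units.zpow_eq_of_modEq hz h, zpow_add, Units.val_mul, zpow_natCast, Units.val_pow_eq_pow_val,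
    hz, mul_neg_one]

def halfPowSum (z : Rˣ) (p : ℤ) : R :=
  ((z ^ ((1 - p) / 2) : Rˣ) : R) + ((z ^ ((1 + p) / 2) : Rˣ) : R)

def halfPowDiff (z : Rˣ) (p : ℤ) : R :=
  ((z ^ ((1 - p) / 2) : Rˣ) : R) - ((z ^ ((1 + p) / 2) : Rˣ) : R)

theorem halfPowSum_one : halfPowSum z 1 = 1 + z := by norm_num [halfPowSum]

theorem halfPowDiff_one : halfPowDiff z 1 = 1 - z := by norm_num [halfPowDiff]

theorem halfPowSum_neg (p : ℤ) : halfPowSum z (-p) = halfPowSum z p := by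
  rw [halfPowSum, halfPowSum, sub_neg_eq_add, ← sub_eq_add_neg, add_comm]

theorem halfPowDiff_neg (p : ℤ) : halfPowDiff z (-p) = -halfPowDiff z p := by
  rw [halfPowDiff, halfPowDiff, sub_neg_eq_add, ← sub_eq_add_neg, neg_sub]

theorem halfPowSum_of_modEq (hz : (z : R) ^ m = -1) {p r : ℤ} (h : p ≡ r [ZMOD 4 * m]) :
    halfPowSum z p = halfPowSum z r := by
  obtain ⟨h₁, h₂⟩ := h.half_exponents
  rw [halfPowSum, halfPowSum, Units.zpow_eq_of_modEq hz h₁, Units.zpow_eq_of_modEq hz h₂]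

theorem halfPowDiff_of_modEq (hz : (z : R) ^ m = -1) {p r : ℤ} (h : p ≡ r [ZMOD 4 * m]) :
    halfPowDiff z p = halfPowDiff z r := by
  obtain ⟨h₁, h₂⟩ := h.half_exponents
  rw [halfPowDiff, halfPowDiff, Units.zpow_eq_of_modEq hz h₁, Units.zpow_eq_of_modEq hz h₂]

theorem halfPowSum_of_modEq_add (hz : (z : R) ^ m = -1) {p r : ℤ}
    (h : p ≡ r + 2 * m [ZMOD 4 * m]) : halfPowSum z p = -halfPowSum z r := by
  obtain ⟨h₁, h₂⟩ := h.half_exponents_add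
  rw [halfPowSum, halfPowSum, Units.zpow_eq_neg_of_modEq hz h₁, Units.zpow_eq_neg_of_modEq hz h₂,
    neg_add]

theorem halfPowDiff_of_modEq_add (hz : (z : R) ^ m = -1) {p r : ℤ}
    (h : p ≡ r + 2 * m [ZMOD 4 * m]) : halfPowDiff z p = -halfPowDiff z r := by
  obtain ⟨h₁, h₂⟩ := h.half_exponents_add
  rw [halfPowDiff, halfPowDiff, Units.zpow_eq_neg_of_modEq hz h₁, Units.zpow_eq_neg_of_modEq hz h₂,
    neg_sub_neg, neg_sub]

end HalfPowers

section Frobenius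

variable {R : Type*} [Ring R] {z : Rˣ} {a φ : R} {p : ℤ}

theorem inv_mul_mul_eq_of_frobenius (hza : (z : R) * a * z = a)
    (haφ : a * φ = φ * a * ((z ^ ((1 - p) / 2) : Rˣ) : R))
    (hzφ : (z : R) * φ = φ * ((z ^ p : Rˣ) : R)) (hp : Odd p) :
    ((z⁻¹ : Rˣ) : R) * a * φ = φ * a * ((z ^ ((1 + p) / 2) : Rˣ) : R) := by
  have hexp : (1 - p) / 2 + p = (1 + p) / 2 := by
    obtain ⟨c, rfl⟩ := hp
    omega
  calc ((z⁻¹ : Rˣ) : R) * a * φ = a * ((z : R) * φ) := by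
        rw [Units.inv_mul_eq_mul_of_mul_mul_eq hza, mul_assoc]
    _ = a * φ * ((z ^ p : Rˣ) : R) := by rw [hzφ, mul_assoc]
    _ = φ * a * ((z ^ ((1 - p) / 2 + p) : Rˣ) : R) := by
        rw [haφ, zpow_add, Units.val_mul, mul_assoc]
    _ = φ * a * ((z ^ ((1 + p) / 2) : Rˣ) : R) := by rw [hexp]

theorem one_add_inv_mul_mul_eq_of_frobenius (hza : (z : R) * a * z = a)
    (haφ : a * φ = φ * a * ((z ^ ((1 - p) / 2) : Rˣ) : R))
    (hzφ : (z : R) * φ = φ * ((z ^ p : Rˣ) : R)) (hp : Odd p) :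
    (1 + ((z⁻¹ : Rˣ) : R)) * a * φ = φ * a * halfPowSum z p := by
  rw [add_mul, add_mul, one_mul, haφ, inv_mul_mul_eq_of_frobenius hza haφ hzφ hp, halfPowSum,
    mul_add]

theorem one_sub_inv_mul_mul_eq_of_frobenius (hza : (z : R) * a * z = a)
    (haφ : a * φ = φ * a * ((z ^ ((1 - p) / 2) : Rˣ) : R))
    (hzφ : (z : R) * φ = φ * ((z ^ p : Rˣ) : R)) (hp : Odd p) :
    (1 - ((z⁻¹ : Rˣ) : R)) * a * φ = φ * a * halfPowDiff z p := by
  rw [sub_mul, sub_mul, one_mul, haφ, inv_mul_mul_eq_of_frobenius hza haφ hzφ hp, halfPowDiff,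
    mul_sub]

theorem one_add_inv_mul_eq (hza : (z : R) * a * z = a) :
    (1 + ((z⁻¹ : Rˣ) : R)) * a = a * halfPowSum z 1 := by
  rw [add_mul, one_mul, Units.inv_mul_eq_mul_of_mul_mul_eq hza, halfPowSum_one, mul_add, mul_one]

theorem one_sub_inv_mul_eq (hza : (z : R) * a * z = a) :
    (1 - ((z⁻¹ : Rˣ) : R)) * a = a * halfPowDiff z 1 := by
  rw [sub_mul, one_mul, Units.inv_mul_eq_mul_of_mul_mul_eq hza, halfPowDiff_one, mul_sub, mul_one]

theorem sub_inv_mul_eq_of_frobenius (hzφ : (z : R) * φ = φ * ((z ^ p : Rˣ) : R)) :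
    ((z : R) - ((z⁻¹ : Rˣ) : R)) * φ = φ * (((z ^ p : Rˣ) : R) - ((z ^ (-p) : Rˣ) : R)) := by
  have hinv : ((z⁻¹ : Rˣ) : R) * φ = φ * ((z ^ (-p) : Rˣ) : R) := by
    rw [zpow_neg]
    exact (SemiconjBy.units_inv_right hzφ.symm).symm
  rw [sub_mul, hzφ, hinv, mul_sub]

end Frobenius

theorem qm_frobenius_commutation_general {R : Type*} [Ring R]
    (m : ℕ) (p : ℤ) (hp : Odd p)
    (z : Rˣ) (a φ : R)
    (hza : (z : R) * a * (z : R) = a)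
    (hzm : ((z : R)) ^ m = -1)
    (haφ : a * φ = φ * a * ((z ^ ((1 - p) / 2) : Rˣ) : R))
    (hzφ : (z : R) * φ = φ * ((z ^ p : Rˣ) : R)) :
    ∀ bplus bminus b : R,
      bplus = (1 + ((z⁻¹ : Rˣ) : R)) * a →
      bminus = (1 - ((z⁻¹ : Rˣ) : R)) * a →
      b = (z : R) - ((z⁻¹ : Rˣ) : R) →
      ((p ≡ 1 [ZMOD (4 * (m : ℤ))] ∨ p ≡ -1 [ZMOD (4 * (m : ℤ))]) →
          bplus * φ = φ * bplus) ∧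
      ((p ≡ 2 * (m : ℤ) + 1 [ZMOD (4 * (m : ℤ))]
          ∨ p ≡ 2 * (m : ℤ) - 1 [ZMOD (4 * (m : ℤ))]) →
          bplus * φ = -(φ * bplus)) ∧
      ((p ≡ 1 [ZMOD (4 * (m : ℤ))] ∨ p ≡ 2 * (m : ℤ) - 1 [ZMOD (4 * (m : ℤ))]) →
          bminus * φ = φ * bminus) ∧
      ((p ≡ -1 [ZMOD (4 * (m : ℤ))] ∨ p ≡ 2 * (m : ℤ) + 1 [ZMOD (4 * (m : ℤ))]) →
          bminus * φ = -(φ * bminus)) ∧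
      ((p ≡ 1 [ZMOD (2 * (m : ℤ))]) → b * φ = φ * b) ∧
      ((p ≡ -1 [ZMOD (2 * (m : ℤ))]) → b * φ = -(φ * b)) := by
  rintro _ _ _ rfl rfl rfl
  have hplus := one_add_inv_mul_mul_eq_of_frobenius hza haφ hzφ hp
  have hminus := one_sub_inv_mul_mul_eq_of_frobenius hza haφ hzφ hp
  have hφplus : φ * ((1 + ((z⁻¹ : Rˣ) : R)) * a) = φ * a * halfPowSum z 1 := by
    rw [one_add_inv_mul_eq hza, mul_assoc]
  have hφminus : φ * ((1 - ((z⁻¹ : Rˣ) : R)) * a) = φ * a * halfPowDiff z 1 := by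
    rw [one_sub_inv_mul_eq hza, mul_assoc]
  have hsub := sub_inv_mul_eq_of_frobenius hzφ
  refine ⟨?_, ?_, ?_, ?_, ?_, ?_⟩
  · rintro (h | h)
    · rw [hplus, hφplus, halfPowSum_of_modEq hzm h]
    · rw [hplus, hφplus, halfPowSum_of_modEq hzm h, halfPowSum_neg]
  · rintro (h | h)
    · rw [hplus, hφplus, halfPowSum_of_modEq_add hzm (add_comm (2 * (m : ℤ)) 1 ▸ h), mul_neg]
    · rw [hplus, hφplus, halfPowSum_of_modEq_add hzm (sub_eq_neg_add (2 * (m : ℤ)) 1 ▸ h),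
        halfPowSum_neg, mul_neg]
  · rintro (h | h)
    · rw [hminus, hφminus, halfPowDiff_of_modEq hzm h]
    · rw [hminus, hφminus, halfPowDiff_of_modEq_add hzm (sub_eq_neg_add (2 * (m : ℤ)) 1 ▸ h),
        halfPowDiff_neg, neg_neg]
  · rintro (h | h)
    · rw [hminus, hφminus, halfPowDiff_of_modEq hzm h, halfPowDiff_neg, mul_neg]
    · rw [hminus, hφminus, halfPowDiff_of_modEq_add hzm (add_comm (2 * (m : ℤ)) 1 ▸ h), mul_neg]
  · intro h
    rw [hsub, Units.zpow_eq_of_modEq hzm h, Units.zpow_eq_of_modEq hzm h.neg, zpow_one,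
      zpow_neg_one]
  · intro h
    rw [hsub, Units.zpow_eq_of_modEq hzm h, Units.zpow_eq_of_modEq hzm h.neg, neg_neg, zpow_one,
      zpow_neg_one, ← mul_neg, neg_sub]

/-- **Proposition 5.9(I)** of the paper (algebraic content).  Let `n = 2m` be
a positive even integer, `p` an odd integer, `R` a ring, `z` a unit of `R`,
and `a, φ ∈ R` with `z·a·z = a`, `z^m = -1`, `a·φ = φ·a·z^{(1-p)/2}` and
`z·φ = φ·z^p`.  Set `b₊ = (1 + z⁻¹)a`, `b₋ = (1 - z⁻¹)a`, `b = z - z⁻¹`.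
Then the listed commutation/anticommutation rules with `φ` hold according to
the residue of `p` modulo `2n = 4m` (resp. modulo `n = 2m`). -/
theorem qm_frobenius_commutation {R : Type*} [Ring R]
    (m : ℕ) (hm : 0 < m) (p : ℤ) (hp : Odd p)
    (z : Rˣ) (a φ : R)
    (hza : (z : R) * a * (z : R) = a)
    (hzm : ((z : R)) ^ m = -1)
    (haφ : a * φ = φ * a * ((z ^ ((1 - p) / 2) : Rˣ) : R))
    (hzφ : (z : R) * φ = φ * ((z ^ p : Rˣ) : R)) :
    ∀ bplus bminus b : R,
      bplus = (1 + ((z⁻¹ : Rˣ) : R)) * a →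
      bminus = (1 - ((z⁻¹ : Rˣ) : R)) * a →
      b = (z : R) - ((z⁻¹ : Rˣ) : R) →
      ((p ≡ 1 [ZMOD (4 * (m : ℤ))] ∨ p ≡ -1 [ZMOD (4 * (m : ℤ))]) →
          bplus * φ = φ * bplus) ∧
      ((p ≡ 2 * (m : ℤ) + 1 [ZMOD (4 * (m : ℤ))]
          ∨ p ≡ 2 * (m : ℤ) - 1 [ZMOD (4 * (m : ℤ))]) →
          bplus * φ = -(φ * bplus)) ∧
      ((p ≡ 1 [ZMOD (4 * (m : ℤ))] ∨ p ≡ 2 * (m : ℤ) - 1 [ZMOD (4 * (m : ℤ))]) →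
          bminus * φ = φ * bminus) ∧
      ((p ≡ -1 [ZMOD (4 * (m : ℤ))] ∨ p ≡ 2 * (m : ℤ) + 1 [ZMOD (4 * (m : ℤ))]) →
          bminus * φ = -(φ * bminus)) ∧
      ((p ≡ 1 [ZMOD (2 * (m : ℤ))]) → b * φ = φ * b) ∧
      ((p ≡ -1 [ZMOD (2 * (m : ℤ))]) → b * φ = -(φ * b)) :=
  qm_frobenius_commutation_general m p hp z a φ hza hzm haφ hzφ
end

section
/- Let ℓ be a prime and let κ ≥ 2 and f ≥ 1 be integers with ℓ − 1 > 6κ. Let a = ∑_{i=0}^{f−1} a_i ℓ^i and b = ∑_{i=0}^{f−1} b_i ℓ^i be integers, where for each i the pair (a_i, b_i) satisfies {a_i, b_i} = {0, 1−κ} as sets (i.e. one of a_i, b_i equals 0 and the other equals 1−κ). Then the three integers 6a, 3(a+b), 6b are pairwise incongruent modulo ℓ^f − 1. -/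
/-! With `d = a - b`, the three differences are `±3d` and `±6d`, so it suffices that
`0 < 6|d| < ℓ^f - 1`. The digits `A i - B i` of `d` in base `ℓ` are all `±(κ - 1)`, so
`(ℓ - 1)|d| ≤ (κ - 1)(ℓ^f - 1)`, which gives the upper bound because `6(κ - 1) < ℓ - 1`;
and `d ≠ 0` because `d ≡ ±(κ - 1) ≢ 0 (mod ℓ)`. -/

theorem abs_sub_eq_abs_of_pair_eq {G : Type*} [AddCommGroup G] [LinearOrder G]
    [IsOrderedAddMonoid G] {x y c : G} (h : ({x, y} : Set G) = {0, c}) :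
    |x - y| = |c| := by
  rcases Set.pair_eq_pair_iff.mp h with ⟨rfl, rfl⟩ | ⟨rfl, rfl⟩
  · rw [zero_sub, abs_neg]
  · rw [sub_zero]

section DigitSum

variable {R : Type*} [CommRing R]

theorem abs_digitSum_mul_le [LinearOrder R] [IsStrictOrderedRing R] {ℓ m : R} (hℓ : 1 ≤ ℓ)
    {f : ℕ} {D : Fin f → R} (hD : ∀ i, |D i| ≤ m) :
    |∑ i : Fin f, D i * ℓ ^ (i : ℕ)| * (ℓ - 1) ≤ m * (ℓ ^ f - 1) := by
  have hpow : ∀ i : ℕ, 0 ≤ ℓ ^ i := pow_nonneg (zero_le_one.trans hℓ)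
  have hsum : |∑ i : Fin f, D i * ℓ ^ (i : ℕ)| ≤ m * ∑ i ∈ Finset.range f, ℓ ^ i :=
    calc |∑ i : Fin f, D i * ℓ ^ (i : ℕ)|
        ≤ ∑ i : Fin f, |D i * ℓ ^ (i : ℕ)| := Finset.abs_sum_le_sum_abs _ _
      _ ≤ ∑ i : Fin f, m * ℓ ^ (i : ℕ) := by
          gcongr with i
          rw [abs_mul, abs_of_nonneg (hpow _)]
          exact mul_le_mul_of_nonneg_right (hD i) (hpow _)
      _ = m * ∑ i ∈ Finset.range f, ℓ ^ i := by
          rw [← Finset.mul_sum, Fin.sum_univ_eq_sum_range (ℓ ^ ·)]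
  calc |∑ i : Fin f, D i * ℓ ^ (i : ℕ)| * (ℓ - 1)
      ≤ m * (∑ i ∈ Finset.range f, ℓ ^ i) * (ℓ - 1) :=
        mul_le_mul_of_nonneg_right hsum (sub_nonneg.mpr hℓ)
    _ = m * (ℓ ^ f - 1) := by rw [mul_assoc, geom_sum_mul]

theorem dvd_head_of_digitSum_eq_zero {ℓ : R} {n : ℕ} {D : Fin (n + 1) → R}
    (h : ∑ i : Fin (n + 1), D i * ℓ ^ (i : ℕ) = 0) : ℓ ∣ D 0 := by
  have htail : ℓ ∣ ∑ i : Fin n, D i.succ * ℓ ^ ((i : ℕ) + 1) :=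
    Finset.dvd_sum fun i _ => ⟨D i.succ * ℓ ^ (i : ℕ), by ring⟩
  rw [Fin.sum_univ_succ] at h
  simp only [Fin.val_zero, pow_zero, mul_one, Fin.val_succ] at h
  rw [eq_neg_of_add_eq_zero_left h]
  exact htail.neg_right

end DigitSum

theorem fundamental_character_exponents_general
    (ℓ : ℕ) (κ f : ℕ) (hκ : 2 ≤ κ) (hf : 1 ≤ f)
    (hℓκ : 6 * (κ : ℤ) < (ℓ : ℤ) - 1)
    (A B : Fin f → ℤ)
    (hAB : ∀ i, ({A i, B i} : Set ℤ) = {0, 1 - (κ : ℤ)})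
    (a b : ℤ)
    (ha : a = ∑ i : Fin f, A i * (ℓ : ℤ) ^ (i : ℕ))
    (hb : b = ∑ i : Fin f, B i * (ℓ : ℤ) ^ (i : ℕ)) :
    ¬ (6 * a ≡ 3 * (a + b) [ZMOD ((ℓ : ℤ) ^ f - 1)]) ∧
    ¬ (6 * a ≡ 6 * b [ZMOD ((ℓ : ℤ) ^ f - 1)]) ∧
    ¬ (3 * (a + b) ≡ 6 * b [ZMOD ((ℓ : ℤ) ^ f - 1)]) := by
  obtain ⟨n, rfl⟩ := Nat.exists_eq_add_of_le' hf
  have hdigit : ∀ i, |A i - B i| = κ - 1 := fun i => by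
    rw [abs_sub_eq_abs_of_pair_eq (hAB i), abs_sub_comm, abs_of_nonneg (by omega)]
  have hd : a - b = ∑ i, (A i - B i) * (ℓ : ℤ) ^ (i : ℕ) := by
    simp only [ha, hb, sub_mul, Finset.sum_sub_distrib]
  have hd0 : a - b ≠ 0 := fun h => by
    have hhead := Int.eq_zero_of_abs_lt_dvd (dvd_head_of_digitSum_eq_zero (hd ▸ h))
      (by rw [hdigit]; omega)
    have := hdigit 0
    rw [hhead, abs_zero] at this
    omega
  have hN : 0 < (ℓ : ℤ) ^ (n + 1) - 1 := sub_pos.mpr (one_lt_pow₀ (by omega) (by omega))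
  have hbound : 6 * |a - b| < (ℓ : ℤ) ^ (n + 1) - 1 := by
    have := hd ▸ abs_digitSum_mul_le (by omega) (fun i => (hdigit i).le)
    nlinarith
  have hndvd : ∀ c : ℤ, c ≠ 0 → |c| ≤ 6 → ¬ (ℓ : ℤ) ^ (n + 1) - 1 ∣ c * (a - b) :=
    fun c hc hc6 hdvd => mul_ne_zero hc hd0 <| Int.eq_zero_of_abs_lt_dvd hdvd <| by
      rw [abs_mul]; nlinarith [abs_nonneg (a - b)]
  refine ⟨?_, ?_, ?_⟩ <;> rw [Int.modEq_iff_dvd]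
  · convert hndvd (-3) (by norm_num) (by norm_num) using 3; ring
  · convert hndvd (-6) (by norm_num) (by norm_num) using 3; ring
  · convert hndvd (-3) (by norm_num) (by norm_num) using 3; ring

/-- The key arithmetic step in the proof of Proposition 3.5 of the paper.
Let `ℓ` be a prime, `κ ≥ 2`, `f ≥ 1` with `ℓ - 1 > 6κ`.  Let
`a = ∑_{i<f} aᵢ ℓ^i` and `b = ∑_{i<f} bᵢ ℓ^i` where for each `i` the pair
`{aᵢ, bᵢ}` equals `{0, 1-κ}` as a set.  Then `6a`, `3(a+b)`, `6b` are
pairwise incongruent modulo `ℓ^f - 1`. -/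
theorem fundamental_character_exponents
    (ℓ : ℕ) (hℓ : ℓ.Prime) (κ f : ℕ) (hκ : 2 ≤ κ) (hf : 1 ≤ f)
    (hℓκ : 6 * (κ : ℤ) < (ℓ : ℤ) - 1)
    (A B : Fin f → ℤ)
    (hAB : ∀ i, ({A i, B i} : Set ℤ) = {0, 1 - (κ : ℤ)})
    (a b : ℤ)
    (ha : a = ∑ i : Fin f, A i * (ℓ : ℤ) ^ (i : ℕ))
    (hb : b = ∑ i : Fin f, B i * (ℓ : ℤ) ^ (i : ℕ)) :
    ¬ (6 * a ≡ 3 * (a + b) [ZMOD ((ℓ : ℤ) ^ f - 1)]) ∧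
    ¬ (6 * a ≡ 6 * b [ZMOD ((ℓ : ℤ) ^ f - 1)]) ∧
    ¬ (3 * (a + b) ≡ 6 * b [ZMOD ((ℓ : ℤ) ^ f - 1)]) :=
  fundamental_character_exponents_general ℓ κ f hκ hf hℓκ A B hAB a b ha hb
end
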